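/- arXiv:1304.1069 — 2 statements merged into one kernel-verified Lean document; each statement's English description precedes it below -/
import Mathlib

section
/- Let X be a compact metric space and let F be a Baire topological space. Suppose P : F → Set X assigns to each f ∈ F a closed subset P(f) ⊆ X, and P is lower semicontinuous with respect to the Hausdorff metric on closed sets (i.e., for every f and ε > 0 there is a neighborhood V of f such that P(f) is contained in the ε-neighborhood of P(g) for all g ∈ V). Then the set of continuity points of P is residual in F. -/
open Metric Filter

/-- Fort-type theorem: a lower semicontinuous map from a Baire space into the closed
subsets of a compact metric space (with Hausdorff metric) is continuous on a residual set. -/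
theorem stmt0 {X F : Type*} [MetricSpace X] [CompactSpace X]
    [TopologicalSpace F] [BaireSpace F]
    (P : F → Set X) (hclosed : ∀ f, IsClosed (P f))
    (hlsc : ∀ f : F, ∀ ε > (0 : ℝ), ∃ V ∈ nhds f, ∀ g ∈ V, P f ⊆ thickening ε (P g)) :
    {f : F | ∀ ε > (0 : ℝ), ∃ V ∈ nhds f, ∀ g ∈ V,
        P f ⊆ thickening ε (P g) ∧ P g ⊆ thickening ε (P f)} ∈ residual F := by
  classical
  -- The sets of points having a neighborhood on which P is uniformly ε-close
  set U : ℝ → Set F := fun ε =>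
    {f | ∃ V : Set F, IsOpen V ∧ f ∈ V ∧ ∀ g ∈ V, ∀ h ∈ V, P g ⊆ thickening ε (P h)}
    with hUdef
  have hUopen : ∀ ε : ℝ, IsOpen (U ε) := by
    intro ε
    rw [isOpen_iff_mem_nhds]
    rintro f ⟨V, hVo, hfV, hV⟩
    exact mem_nhds_iff.2 ⟨V, fun g hg => ⟨V, hVo, hg, hV⟩, hVo, hfV⟩
  have hUdense : ∀ ε : ℝ, 0 < ε → Dense (U ε) := by
    intro ε hε
    rw [dense_iff_inter_open]
    rintro W hWo ⟨w, hw⟩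
    have hε3 : 0 < ε / 3 := by linarith
    -- a finite ε/3-net of X
    obtain ⟨t, -, htfin, htcov⟩ :=
      finite_cover_balls_of_compact (isCompact_univ (X := X)) hε3
    set t' : Finset X := htfin.toFinset with ht'
    have ht'mem : ∀ x, x ∈ t' ↔ x ∈ t := fun x => htfin.mem_toFinset
    -- the trace of P f on the net
    set T : F → Finset X := fun f => t'.filter (fun x => (P f ∩ ball x (ε / 3)).Nonempty)
      with hT
    -- choose f₀ ∈ W maximizing the cardinality of T f₀
    have hSne : ((fun f => (T f).card) '' W).Nonempty := ⟨_, w, hw, rfl⟩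
    have hSbdd : BddAbove ((fun f => (T f).card) '' W) := by
      refine ⟨t'.card, ?_⟩
      rintro n ⟨f, -, rfl⟩
      exact Finset.card_le_card (Finset.filter_subset _ _)
    obtain ⟨f₀, hf₀W, hf₀max⟩ := Nat.sSup_mem hSne hSbdd
    have hf₀max' : (T f₀).card = sSup ((fun f => (T f).card) '' W) := hf₀max
    have hcard : ∀ g ∈ W, (T g).card ≤ (T f₀).card := by
      intro g hg
      rw [hf₀max']
      exact le_csSup hSbdd ⟨g, hg, rfl⟩
    by_cases hTne : (T f₀).Nonempty
    · -- P f₀ is nonempty and compact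
      obtain ⟨x₁, hx₁⟩ := hTne
      obtain ⟨y₁, hy₁⟩ := (Finset.mem_filter.1 hx₁).2
      have hPne : (P f₀).Nonempty := ⟨y₁, hy₁.1⟩
      have hPcpt : IsCompact (P f₀) := (hclosed f₀).isCompact
      -- choose the slack δ
      obtain ⟨x₀, hx₀T, hx₀min⟩ :=
        Finset.exists_min_image (T f₀) (fun x => ε / 3 - infDist x (P f₀)) ⟨x₁, hx₁⟩
      set δ : ℝ := ε / 3 - infDist x₀ (P f₀) with hδdef
      have hδpos : 0 < δ := by
        obtain ⟨y₀, hy₀⟩ := (Finset.mem_filter.1 hx₀T).2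
        have : infDist x₀ (P f₀) ≤ dist x₀ y₀ := infDist_le_dist_of_mem hy₀.1
        have h2 : dist x₀ y₀ < ε / 3 := by
          rw [dist_comm]; exact mem_ball.1 hy₀.2
        simp only [hδdef]; linarith
      obtain ⟨V, hVn, hV⟩ := hlsc f₀ δ hδpos
      set V' : Set F := interior V ∩ W with hV'
      have hV'o : IsOpen V' := (isOpen_interior).inter hWo
      have hf₀V' : f₀ ∈ V' := ⟨mem_interior_iff_mem_nhds.2 hVn, hf₀W⟩
      -- T is constant on V'
      have hTconst : ∀ g ∈ V', T g = T f₀ := by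
        rintro g ⟨hgV, hgW⟩
        have hsub : T f₀ ⊆ T g := by
          intro x hx
          have hinf : infDist x (P f₀) ≤ ε / 3 - δ := by
            have := hx₀min x hx
            simp only [hδdef] at this ⊢; linarith
          obtain ⟨y, hyP, hyd⟩ := hPcpt.exists_infDist_eq_dist hPne x
          obtain ⟨z, hzP, hzd⟩ := mem_thickening_iff.1 (hV g (interior_subset hgV) hyP)
          refine Finset.mem_filter.2 ⟨(Finset.mem_filter.1 hx).1, z, hzP, ?_⟩
          rw [mem_ball]
          calc dist z x ≤ dist z y + dist y x := dist_triangle _ _ _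
            _ < δ + (ε / 3 - δ) := by
                rw [dist_comm z y, dist_comm y x]
                exact add_lt_add_of_lt_of_le hzd (hyd ▸ hinf)
            _ = ε / 3 := by ring
        exact (Finset.eq_of_subset_of_card_le hsub (hcard g hgW)).symm
      -- conclude: f₀ ∈ U ε ∩ W
      refine ⟨f₀, Set.mem_inter hf₀W ?_⟩
      refine ⟨V', hV'o, hf₀V', ?_⟩
      intro g hg h hh y hy
      obtain ⟨x, hxt, hxy⟩ := by
        simpa using htcov (Set.mem_univ y)
      have hxTg : x ∈ T g := Finset.mem_filter.2 ⟨(ht'mem x).2 hxt, y, hy, by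
        rwa [mem_ball]⟩
      have hxTh : x ∈ T h := by
        rw [hTconst h hh, ← hTconst g hg]; exact hxTg
      obtain ⟨z, hzP, hzb⟩ := (Finset.mem_filter.1 hxTh).2
      refine mem_thickening_iff.2 ⟨z, hzP, ?_⟩
      have h1 : dist y x < ε / 3 := hxy
      have h2 : dist z x < ε / 3 := mem_ball.1 hzb
      calc dist y z ≤ dist y x + dist x z := dist_triangle _ _ _
        _ < ε / 3 + ε / 3 := by rw [dist_comm x z]; exact add_lt_add h1 h2
        _ ≤ ε := by linarith
    · -- T f₀ empty : P is empty on all of W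
      have hPempty : ∀ g ∈ W, P g = ∅ := by
        intro g hg
        by_contra hne
        obtain ⟨y, hy⟩ := Set.nonempty_iff_ne_empty.2 hne
        obtain ⟨x, hxt, hxy⟩ := by simpa using htcov (Set.mem_univ y)
        have : x ∈ T g := Finset.mem_filter.2 ⟨(ht'mem x).2 hxt, y, hy, by
          rwa [mem_ball]⟩
        have h1 : 1 ≤ (T g).card := Finset.card_pos.2 ⟨x, this⟩
        have h2 : (T f₀).card = 0 := by
          rw [Finset.card_eq_zero]
          exact Finset.not_nonempty_iff_eq_empty.1 hTne
        have := hcard g hg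
        omega
      refine ⟨f₀, Set.mem_inter hf₀W ?_⟩
      refine ⟨W, hWo, hf₀W, ?_⟩
      intro g hg h hh
      rw [hPempty g hg]
      exact Set.empty_subset _
  -- Baire category argument
  have hres : (⋂ n : ℕ, U (1 / (n + 1))) ∈ residual F :=
    countable_iInter_mem.2 fun n =>
      residual_of_dense_open (hUopen _) (hUdense _ (by positivity))
  refine mem_of_superset hres ?_
  intro f hf ε hε
  obtain ⟨n, hn⟩ := exists_nat_one_div_lt hε
  simp only [Set.mem_iInter] at hf
  obtain ⟨V, hVo, hfV, hV⟩ := hf n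
  refine ⟨V, hVo.mem_nhds hfV, fun g hg => ?_⟩
  constructor
  · exact (hV f hfV g hg).trans (thickening_mono hn.le _)
  · exact (hV g hg f hfV).trans (thickening_mono hn.le _)
end

section
/- Let X be a complete metric space (or more generally a Baire space), let Y be the space of closed subsets of a compact metric space Z with the Hausdorff metric, and let f : X → Y satisfy: ∀x ∀ε>0 ∃U ∋ x open, ∀y ∈ U, f(x) ⊆ B_ε(f(y)). Then for a residual set of x ∈ X, f is continuous at x (i.e., additionally ∀ε>0 ∃U, ∀y ∈ U, f(y) ⊆ B_ε(f(x))). -/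
open Metric Filter

open EMetric ENNReal in
lemma fort_aux_infEdist {Z : Type*} [MetricSpace Z] (z : Z) {S T : Set Z} {ε : ℝ}
    (h : S ⊆ thickening ε T) :
    infEdist z T ≤ infEdist z S + ENNReal.ofReal ε := by
  have heq : infEdist z S + ENNReal.ofReal ε = ⨅ w ∈ S, (edist z w + ENNReal.ofReal ε) := by
    rw [infEdist, infEDist]; simp only [ENNReal.iInf_add]
  rw [heq]
  refine le_iInf fun w => le_iInf fun hw => ?_
  have h1 : infEdist w T < ENNReal.ofReal ε := mem_thickening_iff_infEdist_lt.1 (h hw)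
  calc infEdist z T ≤ edist z w + infEdist w T := infEdist_le_edist_add_infEdist
    _ ≤ edist z w + ENNReal.ofReal ε := add_le_add_right h1.le _

open EMetric ENNReal in
lemma fort_usc {Z X : Type*} [MetricSpace Z] [TopologicalSpace X] (f : X → Set Z)
    (hlsc : ∀ x : X, ∀ ε > (0 : ℝ), ∃ U ∈ nhds x, ∀ y ∈ U, f x ⊆ thickening ε (f y))
    (z : Z) (c : ℝ≥0∞) : IsOpen {x | infEdist z (f x) < c} := by
  rw [isOpen_iff_mem_nhds]
  intro x hx
  obtain ⟨r, rpos, hr⟩ := ENNReal.lt_iff_exists_add_pos_lt.1 (show infEdist z (f x) < c from hx)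
  obtain ⟨U, hU, hU2⟩ := hlsc x r rpos
  filter_upwards [hU] with y hy
  refine lt_of_le_of_lt (fort_aux_infEdist z (hU2 y hy)) ?_
  simpa [ENNReal.ofReal_coe_nnreal] using hr

open EMetric ENNReal in
lemma fort_nwd {Z X : Type*} [MetricSpace Z] [TopologicalSpace X] (f : X → Set Z)
    (husc : ∀ (z : Z) (c : ℝ≥0∞), IsOpen {x | infEdist z (f x) < c})
    (z : Z) (a b : ℚ) (ha : 0 ≤ a) (hab : a < b) :
    (closure {x | infEdist z (f x) ≤ ENNReal.ofReal (a : ℝ)} ∩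
      {x | ENNReal.ofReal (b : ℝ) ≤ infEdist z (f x)})ᶜ ∈ residual X := by
  have hB : IsClosed {x : X | ENNReal.ofReal (b : ℝ) ≤ infEdist z (f x)} := by
    have : {x : X | ENNReal.ofReal (b : ℝ) ≤ infEdist z (f x)}
        = {x : X | infEdist z (f x) < ENNReal.ofReal (b : ℝ)}ᶜ := by
      ext x; simp [not_lt]
    rw [this]
    exact (husc z _).isClosed_compl
  have hcl : IsClosed (closure {x : X | infEdist z (f x) ≤ ENNReal.ofReal (a : ℝ)} ∩
      {x | ENNReal.ofReal (b : ℝ) ≤ infEdist z (f x)}) := isClosed_closure.inter hB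
  refine residual_of_dense_open hcl.isOpen_compl ?_
  rw [← interior_eq_empty_iff_dense_compl, Set.eq_empty_iff_forall_notMem]
  intro x hx
  have hxS := interior_subset hx
  obtain ⟨y, hy⟩ := mem_closure_iff_nhds.1 hxS.1 _ (isOpen_interior.mem_nhds hx)
  have h1 : ENNReal.ofReal (b : ℝ) ≤ infEdist z (f y) := (interior_subset hy.1).2
  have h2 : infEdist z (f y) ≤ ENNReal.ofReal (a : ℝ) := hy.2
  have h3 : ENNReal.ofReal (a : ℝ) < ENNReal.ofReal (b : ℝ) :=
    (ENNReal.ofReal_lt_ofReal_iff (by exact_mod_cast ha.trans_lt hab)).2 (by exact_mod_cast hab)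
  exact absurd (h1.trans h2) h3.not_ge

open EMetric ENNReal in
lemma fort_L {Z X : Type*} [MetricSpace Z] [CompactSpace Z] [TopologicalSpace X]
    (f : X → Set Z) (z : Z) (x : X)
    (hx : ∀ a b : ℚ, 0 ≤ a → a < b →
      x ∉ (closure {y | infEdist z (f y) ≤ ENNReal.ofReal (a : ℝ)} ∩
        {y | ENNReal.ofReal (b : ℝ) ≤ infEdist z (f y)}))
    {ε : ℝ} (hε : 0 < ε) :
    ∀ᶠ y in nhds x, infEdist z (f x) ≤ infEdist z (f y) + ENNReal.ofReal ε := by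
  by_contra hcon
  rw [Filter.not_eventually] at hcon
  have hfreq : ∃ᶠ y in nhds x, infEdist z (f y) + ENNReal.ofReal ε < infEdist z (f x) := by
    simpa only [not_le] using hcon
  have hbd : ∀ y : X, infEdist z (f y) ≠ ⊤ →
      infEdist z (f y) ≤ EMetric.diam (Set.univ : Set Z) := by
    intro y hy
    rcases Set.eq_empty_or_nonempty (f y) with h | ⟨w, hw⟩
    · rw [h] at hy; exact absurd infEDist_empty hy
    · exact (infEdist_le_edist_of_mem hw).trans
        (edist_le_diam_of_mem (Set.mem_univ z) (Set.mem_univ w))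
  have hdiam : EMetric.diam (Set.univ : Set Z) ≠ ⊤ :=
    isCompact_univ.isBounded.ediam_ne_top
  rcases eq_or_ne (infEdist z (f x)) ⊤ with htop | htop
  · obtain ⟨a, haD⟩ := exists_rat_gt (EMetric.diam (Set.univ : Set Z)).toReal
    have ha0 : (0:ℚ) ≤ a := by
      have h0 : (0:ℝ) ≤ (EMetric.diam (Set.univ : Set Z)).toReal := ENNReal.toReal_nonneg
      exact_mod_cast h0.trans haD.le
    refine hx a (a+1) ha0 (lt_add_one a) ⟨?_, ?_⟩
    · refine mem_closure_iff_frequently.2 (hfreq.mono fun y hy => ?_)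
      have hy' : infEdist z (f y) ≠ ⊤ := ne_top_of_lt (lt_of_le_of_lt le_self_add hy)
      refine (hbd y hy').trans ?_
      rw [ENNReal.le_ofReal_iff_toReal_le hdiam (by exact_mod_cast ha0)]
      exact haD.le
    · rw [Set.mem_setOf_eq, htop]; exact le_top
  · set t := (infEdist z (f x)).toReal with ht
    obtain ⟨y0, hy0⟩ := hfreq.exists
    have hεt : ε < t := by
      have h1 : ENNReal.ofReal ε < infEdist z (f x) := lt_of_le_of_lt le_add_self hy0
      exact (ENNReal.ofReal_lt_iff_lt_toReal hε.le htop).1 h1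
    obtain ⟨a, ha1, ha2⟩ := exists_rat_btwn (show t - ε < t - ε/2 by linarith)
    obtain ⟨b, hb1, hb2⟩ := exists_rat_btwn (show (a:ℝ) < t by linarith)
    have ha0 : (0:ℚ) ≤ a := by exact_mod_cast (show (0:ℝ) ≤ a by linarith)
    have hab : a < b := by exact_mod_cast hb1
    refine hx a b ha0 hab ⟨?_, ?_⟩
    · refine mem_closure_iff_frequently.2 (hfreq.mono fun y hy => ?_)
      have hy' : infEdist z (f y) ≠ ⊤ := ne_top_of_lt (lt_of_le_of_lt le_self_add hy)
      have hlt : (infEdist z (f y)).toReal + ε < t := by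
        have := (ENNReal.toReal_lt_toReal (by
            simp [ENNReal.add_ne_top, hy', ENNReal.ofReal_ne_top]) htop).2 hy
        rwa [ENNReal.toReal_add hy' ENNReal.ofReal_ne_top, ENNReal.toReal_ofReal hε.le] at this
      refine (ENNReal.le_ofReal_iff_toReal_le hy' (by exact_mod_cast ha0)).2 ?_
      linarith
    · exact (ENNReal.ofReal_le_iff_le_toReal htop).2 hb2.le

/-- Fort's theorem: a set-valued map from a Baire space into the closed subsets of a
compact metric space (Hausdorff metric) which is lower semicontinuous everywhere is
continuous at a residual set of points. -/
theorem stmt9 {Z X : Type*} [MetricSpace Z] [CompactSpace Z]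
    [TopologicalSpace X] [BaireSpace X]
    (f : X → Set Z) (hclosed : ∀ x, IsClosed (f x))
    (hlsc : ∀ x : X, ∀ ε > (0 : ℝ), ∃ U ∈ nhds x, ∀ y ∈ U, f x ⊆ thickening ε (f y)) :
    {x : X | ∀ ε > (0 : ℝ), ∃ U ∈ nhds x, ∀ y ∈ U,
      f x ⊆ thickening ε (f y) ∧ f y ⊆ thickening ε (f x)} ∈ residual X := by
  classical
  have husc := fort_usc f hlsc
  obtain ⟨D, Dcount, Ddense⟩ := TopologicalSpace.exists_countable_dense Z
  have : Countable D := Dcount.to_subtype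
  set R : Set X := ⋂ (z : D) (p : {p : ℚ × ℚ // 0 ≤ p.1 ∧ p.1 < p.2}),
      (closure {x | EMetric.infEdist (z : Z) (f x) ≤ ENNReal.ofReal ((p : ℚ × ℚ).1 : ℝ)} ∩
        {x | ENNReal.ofReal ((p : ℚ × ℚ).2 : ℝ) ≤ EMetric.infEdist (z : Z) (f x)})ᶜ with hR
  have hRmem : R ∈ residual X := by
    refine countable_iInter_mem.2 fun z => countable_iInter_mem.2 fun p => ?_
    exact fort_nwd f husc (z : Z) p.1.1 p.1.2 p.2.1 p.2.2
  refine Filter.mem_of_superset hRmem ?_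
  intro x hxR
  have hL : ∀ (z : D) {ε : ℝ}, 0 < ε → ∀ᶠ y in nhds x,
      EMetric.infEdist (z : Z) (f x) ≤ EMetric.infEdist (z : Z) (f y) + ENNReal.ofReal ε := by
    intro z ε hε
    refine fort_L f (z : Z) x (fun a b ha hab => ?_) hε
    have := Set.mem_iInter.1 (Set.mem_iInter.1 hxR z) ⟨(a, b), ha, hab⟩
    exact this
  intro ε hε
  obtain ⟨U1, hU1, hU1'⟩ := hlsc x ε hε
  -- finite cover of Z by ε/4-balls centered in D
  have hcover : (Set.univ : Set Z) ⊆ ⋃ z : D, ball (z : Z) (ε / 4) := by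
    intro w _
    obtain ⟨z, hzD, hzd⟩ := Ddense.exists_dist_lt w (by linarith : (0:ℝ) < ε / 4)
    exact Set.mem_iUnion.2 ⟨⟨z, hzD⟩, by simpa [dist_comm] using hzd⟩
  obtain ⟨tfin, htfin⟩ := isCompact_univ.elim_finite_subcover
    (fun z : D => ball (z : Z) (ε / 4)) (fun z => isOpen_ball) hcover
  have hev : ∀ᶠ y in nhds x, ∀ z ∈ tfin,
      EMetric.infEdist (z : Z) (f x) ≤ EMetric.infEdist (z : Z) (f y) + ENNReal.ofReal (ε/4) :=
    tfin.eventually_all.2 fun z _ => hL z (by linarith)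
  obtain ⟨V, hV, hV'⟩ := Filter.eventually_iff_exists_mem.1 hev
  refine ⟨U1 ∩ V, Filter.inter_mem hU1 hV, fun y hy => ⟨hU1' y hy.1, ?_⟩⟩
  intro w hw
  obtain ⟨z, hzt, hzw⟩ : ∃ z ∈ tfin, w ∈ ball (z : Z) (ε / 4) := by
    have := htfin (Set.mem_univ w)
    simpa using this
  rw [mem_thickening_iff_infEdist_lt]
  have hzw' : edist w (z : Z) < ENNReal.ofReal (ε/4) := by
    rw [edist_dist]
    exact ENNReal.ofReal_lt_ofReal_iff (by linarith) |>.2 (mem_ball.1 hzw)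
  have h1 : EMetric.infEdist (z : Z) (f y) ≤ ENNReal.ofReal (ε/4) := by
    refine (EMetric.infEdist_le_edist_of_mem hw).trans ?_
    rw [edist_comm]
    exact hzw'.le
  have h2 : EMetric.infEdist (z : Z) (f x) ≤ ENNReal.ofReal (ε/4) + ENNReal.ofReal (ε/4) :=
    (hV' y hy.2 z hzt).trans (add_le_add_left h1 _)
  calc EMetric.infEdist w (f x)
      ≤ edist w (z : Z) + EMetric.infEdist (z : Z) (f x) :=
        EMetric.infEdist_le_edist_add_infEdist
    _ ≤ ENNReal.ofReal (ε/4) + (ENNReal.ofReal (ε/4) + ENNReal.ofReal (ε/4)) :=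
        add_le_add hzw'.le h2
    _ = ENNReal.ofReal (ε/4 + (ε/4 + ε/4)) := by
        rw [← ENNReal.ofReal_add (by linarith) (by linarith),
          ← ENNReal.ofReal_add (by linarith) (by linarith)]
    _ < ENNReal.ofReal ε := (ENNReal.ofReal_lt_ofReal_iff hε).2 (by linarith)
end
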